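/- Let H ⊆ L²(ℝ^d) be a Hilbert space of functions with norm ‖·‖_H and constant C₀ ≥ 1 such that ‖e^{i⟨·,ξ⟩}f(·−x)‖_H ≤ C₀‖f‖_H for all f ∈ H and x, ξ ∈ ℝ^d, and assume (x,ξ) ↦ ‖e^{i⟨·,ξ⟩}f(·−x)‖_H² is measurable for each f. Suppose N is a norm on H obtained as a pointwise limit N(f) = lim_k ‖f‖_{[R_k]} along a sequence R_k → ∞ of the averaged norms ‖f‖_{[R]}² = (2R)^{-2d}∫∫_{[-R,R]^{2d}} ‖e^{i⟨·,η⟩}f(·−y)‖_H² dy dη. Then N is invariant under all translations and modulations: N(e^{i⟨·,ξ⟩}f(·−x)) = N(f) for every f ∈ H and x, ξ ∈ ℝ^d. -/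

import Mathlib

open MeasureTheory Filter Topology Complex

/-- Time-frequency shift `e^{i⟨·,ξ⟩} f(· − x)` on functions `ℝ^d → ℂ`. -/
noncomputable def tfShift {d : ℕ} (x ξ : Fin d → ℝ) (f : (Fin d → ℝ) → ℂ) :
    (Fin d → ℝ) → ℂ :=
  fun y => Complex.exp (Complex.I * ((∑ i, y i * ξ i : ℝ) : ℂ)) * f (y - x)

/-- The cube `[-R,R]^n` in `ℝ^n`. -/
def cube (n : ℕ) (R : ℝ) : Set (Fin n → ℝ) := Set.univ.pi fun _ => Set.Icc (-R) R

/-!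
Writing `π(x, ξ)` for `tfShift x ξ`: since `π(y, η) π(x, ξ) f` is a unimodular multiple of
`π(y + x, η + ξ) f`, the integrand defining `‖π(x, ξ) f‖²_{[R]}` is the one defining `‖f‖²_{[R]}`
translated by `(x, ξ)`. The cube `Q_R = [-R, R]^{2d}` is the sup-norm ball of radius `R`, so it
and its translate both contain `Q_{R - ‖(x, ξ)‖}`. As the integrand is bounded by `C₀² ‖f‖²`, the
two integrals differ by at most `2 C₀² ‖f‖² (|Q_R| - |Q_{R - ‖(x, ξ)‖}|) = o(|Q_R|)`.
-/

open Metric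

theorem nonneg_of_norm_smul_of_add_le {𝕜 V : Type*} [NormedField 𝕜] [AddCommGroup V]
    [Module 𝕜 V] {H : Submodule 𝕜 V} {N : V → ℝ}
    (hsmul : ∀ (c : 𝕜), ∀ f ∈ H, N (c • f) = ‖c‖ * N f)
    (hadd : ∀ f ∈ H, ∀ g ∈ H, N (f + g) ≤ N f + N g) {f : V} (hf : f ∈ H) : 0 ≤ N f := by
  have hzero : N 0 = 0 := by simpa using hsmul 0 f hf
  have h := hadd f hf ((-1 : 𝕜) • f) (H.smul_mem _ hf)
  rw [hsmul _ f hf, neg_one_smul, add_neg_cancel, hzero, norm_neg, norm_one] at h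
  linarith

theorem tfShift_tfShift {d : ℕ} (x ξ y η : Fin d → ℝ) (f : (Fin d → ℝ) → ℂ) :
    tfShift y η (tfShift x ξ f) =
      Complex.exp ((-∑ i, y i * ξ i : ℝ) * I) • tfShift (y + x) (η + ξ) f := by
  funext t
  simp only [tfShift, Pi.smul_apply, smul_eq_mul, Pi.sub_apply, Pi.add_apply, sub_mul, mul_add,
    Finset.sum_sub_distrib, Finset.sum_add_distrib, sub_sub]
  rw [← mul_assoc, ← mul_assoc, ← Complex.exp_add, ← Complex.exp_add]
  push_cast
  ring_nf

theorem norm_tfShift_tfShift {d : ℕ} {H : Submodule ℂ ((Fin d → ℝ) → ℂ)}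
    {N : ((Fin d → ℝ) → ℂ) → ℝ} (hsmul : ∀ (c : ℂ), ∀ f ∈ H, N (c • f) = ‖c‖ * N f)
    (hmem : ∀ (x ξ : Fin d → ℝ), ∀ f ∈ H, tfShift x ξ f ∈ H) {f : (Fin d → ℝ) → ℂ}
    (hf : f ∈ H) (x ξ y η : Fin d → ℝ) :
    N (tfShift y η (tfShift x ξ f)) = N (tfShift (y + x) (η + ξ) f) := by
  rw [tfShift_tfShift, hsmul _ _ (hmem _ _ f hf), Complex.norm_exp_ofReal_mul_I, one_mul]

theorem cube_eq_closedBall {n : ℕ} {R : ℝ} (hR : 0 ≤ R) : cube n R = closedBall 0 R := by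
  simp [cube, closedBall_pi _ hR, Real.closedBall_eq_Icc]

theorem cube_prod_cube_eq_closedBall {n : ℕ} {R : ℝ} (hR : 0 ≤ R) :
    cube n R ×ˢ cube n R = closedBall 0 R := by
  rw [cube_eq_closedBall hR, closedBall_prod_same]
  rfl

theorem volume_real_closedBall_prod {ι κ : Type*} [Fintype ι] [Fintype κ]
    (v : (ι → ℝ) × (κ → ℝ)) {r : ℝ} (hr : 0 ≤ r) :
    (volume : Measure ((ι → ℝ) × (κ → ℝ))).real (closedBall v r) =
      (2 * r) ^ (Fintype.card ι + Fintype.card κ) := by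
  rw [← closedBall_prod_same, Measure.volume_eq_prod, measureReal_prod_prod, measureReal_def,
    measureReal_def, Real.volume_pi_closedBall _ hr, Real.volume_pi_closedBall _ hr,
    ENNReal.toReal_ofReal (by positivity), ENNReal.toReal_ofReal (by positivity), pow_add]

theorem abs_setIntegral_sub_setIntegral_le {α : Type*} [MeasurableSpace α] {μ : Measure α}
    {φ : α → ℝ} {M : ℝ} (hφ : AEStronglyMeasurable φ μ) (hM : ∀ a, |φ a| ≤ M) {s t : Set α}
    (hs : MeasurableSet s) (ht : MeasurableSet t) (hsμ : μ s ≠ ⊤) (htμ : μ t ≠ ⊤) :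
    |∫ a in s, φ a ∂μ - ∫ a in t, φ a ∂μ| ≤ M * (μ.real (s \ t) + μ.real (t \ s)) := by
  have hint : ∀ u, μ u ≠ ⊤ → IntegrableOn φ u μ := fun u hu =>
    Measure.integrableOn_of_bounded hu hφ (ae_of_all _ hM)
  have hdiff : ∀ u w, μ u ≠ ⊤ → ‖∫ a in u \ w, φ a ∂μ‖ ≤ M * μ.real (u \ w) := fun u w hu =>
    norm_setIntegral_le_of_norm_le_const ((measure_mono Set.sdiff_subset).trans_lt hu.lt_top)
      fun a _ => hM a
  rw [← integral_inter_add_sdiff ht (hint s hsμ), ← integral_inter_add_sdiff hs (hint t htμ),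
    Set.inter_comm, add_sub_add_left_eq_sub, mul_add]
  exact (abs_sub _ _).trans (add_le_add (hdiff s t hsμ) (hdiff t s htμ))

theorem measureReal_sdiff_le_of_subset_inter {α : Type*} [MeasurableSpace α] {μ : Measure α}
    {s t K : Set α} (hK : K ⊆ s ∩ t) (hKm : MeasurableSet K) (hs : μ s ≠ ⊤) :
    μ.real (s \ t) ≤ μ.real s - μ.real K := by
  rw [← measureReal_sdiff (hK.trans Set.inter_subset_left) hKm hs]
  exact measureReal_mono (Set.sdiff_subset_sdiff_right (hK.trans Set.inter_subset_right))
    ((measure_mono Set.sdiff_subset).trans_lt hs.lt_top).ne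

theorem abs_setIntegral_closedBall_comp_add_right_sub_le {E : Type*} [NormedAddCommGroup E]
    [MeasurableSpace E] [BorelSpace E] [ProperSpace E] {μ : Measure E} [μ.IsAddRightInvariant]
    [IsFiniteMeasureOnCompacts μ] {φ : E → ℝ} {M : ℝ} (hφ : AEStronglyMeasurable φ μ)
    (hM : ∀ a, |φ a| ≤ M) (v : E) (R : ℝ) :
    |∫ q in closedBall 0 R, φ (q + v) ∂μ - ∫ q in closedBall 0 R, φ q ∂μ| ≤
      2 * M * (μ.real (closedBall 0 R) - μ.real (closedBall 0 (R - ‖v‖))) := by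
  have hpre : (· + v) ⁻¹' closedBall v R = closedBall 0 R := by
    rw [preimage_add_right_closedBall, sub_self]
  have htrans : ∫ q in closedBall 0 R, φ (q + v) ∂μ = ∫ q in closedBall v R, φ q ∂μ := by
    rw [← (measurePreserving_add_right μ v).setIntegral_preimage_emb
      (measurableEmbedding_addRight v) φ (closedBall v R), hpre]
  have hvol : μ.real (closedBall v R) = μ.real (closedBall 0 R) := by
    rw [measureReal_def, measureReal_def, ← measure_preimage_add_right μ v, hpre]
  have hK : closedBall 0 (R - ‖v‖) ⊆ closedBall v R ∩ closedBall 0 R :=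
    Set.subset_inter (closedBall_subset_closedBall' (by simp [dist_eq_norm]))
      (closedBall_subset_closedBall (by linarith [norm_nonneg v]))
  have hM0 : 0 ≤ M := (abs_nonneg _).trans (hM 0)
  have h₁ := measureReal_sdiff_le_of_subset_inter (μ := μ) hK isClosed_closedBall.measurableSet
    measure_closedBall_lt_top.ne
  have h₂ := measureReal_sdiff_le_of_subset_inter (μ := μ) (hK.trans (Set.inter_comm _ _).le)
    isClosed_closedBall.measurableSet measure_closedBall_lt_top.ne
  rw [htrans]
  refine (abs_setIntegral_sub_setIntegral_le hφ hM isClosed_closedBall.measurableSet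
    isClosed_closedBall.measurableSet measure_closedBall_lt_top.ne
    measure_closedBall_lt_top.ne).trans ?_
  rw [hvol] at h₁
  exact (mul_le_mul_of_nonneg_left (add_le_add h₁ h₂) hM0).trans_eq (by ring)

theorem tendsto_average_closedBall_comp_add_right_sub {d : ℕ}
    {φ : (Fin d → ℝ) × (Fin d → ℝ) → ℝ} {M : ℝ} (hφ : AEStronglyMeasurable φ volume)
    (hM : ∀ q, |φ q| ≤ M) (v : (Fin d → ℝ) × (Fin d → ℝ)) :
    Tendsto (fun R : ℝ => ((2 * R) ^ (2 * d))⁻¹ *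
      ((∫ q in closedBall 0 R, φ (q + v)) - ∫ q in closedBall 0 R, φ q)) atTop (𝓝 0) := by
  have : (volume : Measure ((Fin d → ℝ) × (Fin d → ℝ))).IsAddRightInvariant := by
    rw [Measure.volume_eq_prod]; infer_instance
  have hvol : ∀ r : ℝ, 0 ≤ r →
      (volume : Measure ((Fin d → ℝ) × (Fin d → ℝ))).real (closedBall 0 r) = (2 * r) ^ (2 * d) :=
    fun r hr => by rw [volume_real_closedBall_prod _ hr, Fintype.card_fin, ← two_mul]
  have hbound : ∀ᶠ R in atTop, ‖((2 * R) ^ (2 * d))⁻¹ *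
      ((∫ q in closedBall 0 R, φ (q + v)) - ∫ q in closedBall 0 R, φ q)‖ ≤
        2 * M * (1 - (1 - ‖v‖ / R) ^ (2 * d)) := by
    filter_upwards [eventually_ge_atTop ‖v‖, eventually_gt_atTop 0] with R hRv hR
    have h := abs_setIntegral_closedBall_comp_add_right_sub_le hφ hM v R
    rw [hvol R hR.le, hvol _ (sub_nonneg.2 hRv)] at h
    calc _ = ((2 * R) ^ (2 * d))⁻¹ *
          |(∫ q in closedBall 0 R, φ (q + v)) - ∫ q in closedBall 0 R, φ q| := by
          rw [Real.norm_eq_abs, abs_mul, abs_of_pos (by positivity)]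
      _ ≤ ((2 * R) ^ (2 * d))⁻¹ * (2 * M * ((2 * R) ^ (2 * d) - (2 * (R - ‖v‖)) ^ (2 * d))) := by
          gcongr
      _ = 2 * M * (1 - (1 - ‖v‖ / R) ^ (2 * d)) := by
          rw [one_sub_div hR.ne', div_pow, mul_pow, mul_pow]
          field_simp
  have hlim : Tendsto (fun R : ℝ => 2 * M * (1 - (1 - ‖v‖ / R) ^ (2 * d))) atTop (𝓝 0) := by
    have h : Tendsto (fun R : ℝ => ‖v‖ / R) atTop (𝓝 0) :=
      tendsto_const_nhds.div_atTop tendsto_id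
    simpa using (tendsto_const_nhds (x := 2 * M)).mul ((tendsto_const_nhds (x := (1 : ℝ))).sub
      (((tendsto_const_nhds (x := (1 : ℝ))).sub h).pow (2 * d)))
  exact squeeze_zero_norm' hbound hlim

theorem stmt7_general {d : ℕ} (H : Submodule ℂ ((Fin d → ℝ) → ℂ))
    (N : ((Fin d → ℝ) → ℂ) → ℝ)
    (hsmul : ∀ (c : ℂ), ∀ f ∈ H, N (c • f) = ‖c‖ * N f)
    (hadd : ∀ f ∈ H, ∀ g ∈ H, N (f + g) ≤ N f + N g)
    (hmem : ∀ (x ξ : Fin d → ℝ), ∀ f ∈ H, tfShift x ξ f ∈ H)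
    (C₀ : ℝ)
    (hbound : ∀ (x ξ : Fin d → ℝ), ∀ f ∈ H, N (tfShift x ξ f) ≤ C₀ * N f)
    (hmeas : ∀ f ∈ H, Measurable fun q : (Fin d → ℝ) × (Fin d → ℝ) =>
      N (tfShift q.1 q.2 f) ^ 2)
    (NR : ℝ → ((Fin d → ℝ) → ℂ) → ℝ)
    (hNR : ∀ (R : ℝ) (f : (Fin d → ℝ) → ℂ), NR R f = Real.sqrt
      ((((2 * R) ^ (2 * d) : ℝ))⁻¹ *
        ∫ q in (cube d R) ×ˢ (cube d R), N (tfShift q.1 q.2 f) ^ 2))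
    (Rseq : ℕ → ℝ)
    (hRseq : Tendsto Rseq atTop atTop)
    (Nlim : ((Fin d → ℝ) → ℂ) → ℝ)
    (hNlim : ∀ f ∈ H, Tendsto (fun k => NR (Rseq k) f) atTop (𝓝 (Nlim f))) :
    ∀ f ∈ H, ∀ (x ξ : Fin d → ℝ), Nlim (tfShift x ξ f) = Nlim f := by
  intro f hf x ξ
  have hg : tfShift x ξ f ∈ H := hmem x ξ f hf
  have hNR_sq : ∀ (g : (Fin d → ℝ) → ℂ) (R : ℝ), 0 ≤ R → NR R g ^ 2 =
      ((2 * R) ^ (2 * d))⁻¹ * ∫ q in closedBall (0 : (Fin d → ℝ) × (Fin d → ℝ)) R,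
        N (tfShift q.1 q.2 g) ^ 2 := fun g R hR => by
    rw [hNR, Real.sq_sqrt (mul_nonneg (by positivity) (integral_nonneg fun _ => sq_nonneg _)),
      cube_prod_cube_eq_closedBall hR]
  set φ := fun q : (Fin d → ℝ) × (Fin d → ℝ) => N (tfShift q.1 q.2 f) ^ 2
  have hφ : ∀ q, |φ q| ≤ (C₀ * N f) ^ 2 := fun q => by
    rw [abs_of_nonneg (sq_nonneg _)]
    exact pow_le_pow_left₀ (nonneg_of_norm_smul_of_add_le hsmul hadd (hmem _ _ f hf))
      (hbound _ _ f hf) 2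
  have hdiff : Tendsto (fun k => NR (Rseq k) (tfShift x ξ f) ^ 2 - NR (Rseq k) f ^ 2) atTop
      (𝓝 0) := by
    refine ((tendsto_average_closedBall_comp_add_right_sub (hmeas f hf).aestronglyMeasurable hφ
      (x, ξ)).comp hRseq).congr' ?_
    filter_upwards [hRseq.eventually_ge_atTop 0] with k hk
    simp only [Function.comp_apply, hNR_sq _ _ hk, norm_tfShift_tfShift hsmul hmem hf, mul_sub]
    rfl
  have hsq : Nlim (tfShift x ξ f) ^ 2 = Nlim f ^ 2 := sub_eq_zero.mp <|
    tendsto_nhds_unique (((hNlim _ hg).pow 2).sub ((hNlim f hf).pow 2)) hdiff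
  have hNlim_nonneg : ∀ g ∈ H, 0 ≤ Nlim g := fun g hgH =>
    ge_of_tendsto' (hNlim g hgH) fun k => by rw [hNR]; positivity
  exact (pow_left_inj₀ (hNlim_nonneg _ hg) (hNlim_nonneg f hf) two_ne_zero).1 hsq

theorem stmt7 {d : ℕ} (H : Submodule ℂ ((Fin d → ℝ) → ℂ))
    (hL2 : ∀ f ∈ H, MemLp f 2 (volume : Measure (Fin d → ℝ)))
    (N : ((Fin d → ℝ) → ℂ) → ℝ)
    (hzero : ∀ f ∈ H, (N f = 0 ↔ f = 0))
    (hsmul : ∀ (c : ℂ), ∀ f ∈ H, N (c • f) = ‖c‖ * N f)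
    (hadd : ∀ f ∈ H, ∀ g ∈ H, N (f + g) ≤ N f + N g)
    (hpar : ∀ f ∈ H, ∀ g ∈ H,
      N (f + g) ^ 2 + N (f - g) ^ 2 = 2 * N f ^ 2 + 2 * N g ^ 2)
    (hmem : ∀ (x ξ : Fin d → ℝ), ∀ f ∈ H, tfShift x ξ f ∈ H)
    (C₀ : ℝ) (hC₀ : 1 ≤ C₀)
    (hbound : ∀ (x ξ : Fin d → ℝ), ∀ f ∈ H, N (tfShift x ξ f) ≤ C₀ * N f)
    (hmeas : ∀ f ∈ H, Measurable fun q : (Fin d → ℝ) × (Fin d → ℝ) =>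
      N (tfShift q.1 q.2 f) ^ 2)
    (NR : ℝ → ((Fin d → ℝ) → ℂ) → ℝ)
    (hNR : ∀ (R : ℝ) (f : (Fin d → ℝ) → ℂ), NR R f = Real.sqrt
      ((((2 * R) ^ (2 * d) : ℝ))⁻¹ *
        ∫ q in (cube d R) ×ˢ (cube d R), N (tfShift q.1 q.2 f) ^ 2))
    (Rseq : ℕ → ℝ) (hRseq1 : ∀ k, 1 ≤ Rseq k)
    (hRseq : Tendsto Rseq atTop atTop)
    (Nlim : ((Fin d → ℝ) → ℂ) → ℝ)
    (hNlim : ∀ f ∈ H, Tendsto (fun k => NR (Rseq k) f) atTop (𝓝 (Nlim f))) :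
    ∀ f ∈ H, ∀ (x ξ : Fin d → ℝ), Nlim (tfShift x ξ f) = Nlim f :=
  stmt7_general H N hsmul hadd hmem C₀ hbound hmeas NR hNR Rseq hRseq Nlim hNlim
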